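/- In particular, the maximum (6,2)-shelf {1,2,3,5,6} is not a subset of any maximum (m,2)-shelf for m ≥ 9. -/

import Mathlib

/-!
If `2`, `3` and `6` all lie in a `2`-shelf `A`, then `2` and `6` are the only even elements of `A`
and `3` and `6` the only multiples of `3`. Trading `6` for `4` and `9` therefore gives a larger
`2`-shelf inside `{1, …, m}` as soon as `9 ≤ m`, so `A` was not maximum.
-/

open Finset

def IsShelf (k : ℕ) (A : Finset ℕ) : Prop :=
  ∀ p : ℕ, p.Prime → #(A.filter (p ∣ ·)) ≤ k

theorem IsShelf.eq_or_eq_of_dvd {A : Finset ℕ} (hA : IsShelf 2 A) {p a b c : ℕ} (hp : p.Prime)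
    (ha : a ∈ A) (hb : b ∈ A) (hab : a ≠ b) (hpa : p ∣ a) (hpb : p ∣ b)
    (hc : c ∈ A) (hpc : p ∣ c) : c = a ∨ c = b := by
  have hsub : {a, b} ⊆ A.filter (p ∣ ·) := by simp [insert_subset_iff, *]
  have heq := eq_of_subset_of_card_le hsub (by rw [card_pair hab]; exact hA p hp)
  simpa [← heq] using mem_filter.2 ⟨hc, hpc⟩

def exchangeProduct (A : Finset ℕ) (p q : ℕ) : Finset ℕ :=
  insert (p ^ 2) (insert (q ^ 2) (A.erase (p * q)))

theorem exchangeProduct_comm (A : Finset ℕ) (p q : ℕ) :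
    exchangeProduct A p q = exchangeProduct A q p := by
  simp only [exchangeProduct, insert_comm (p ^ 2), mul_comm p]

theorem exchangeProduct_subset_Icc {A : Finset ℕ} {m p q : ℕ} (hA : A ⊆ Icc 1 m)
    (hp : 0 < p) (hq : 0 < q) (hpm : p ^ 2 ≤ m) (hqm : q ^ 2 ≤ m) :
    exchangeProduct A p q ⊆ Icc 1 m := by
  have hp1 : 1 ≤ p ^ 2 := Nat.one_le_pow _ _ hp
  have hq1 : 1 ≤ q ^ 2 := Nat.one_le_pow _ _ hq
  simp only [exchangeProduct, insert_subset_iff, mem_Icc]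
  exact ⟨⟨hp1, hpm⟩, ⟨hq1, hqm⟩, (erase_subset _ _).trans hA⟩

section Exchange

variable {A : Finset ℕ} {p q : ℕ} (hA : IsShelf 2 A) (hp : p.Prime) (hq : q.Prime) (hpq : p ≠ q)
  (hpA : p ∈ A) (hqA : q ∈ A) (hpqA : p * q ∈ A)
include hA hp hq hpA hpqA

theorem IsShelf.eq_or_eq_of_prime_dvd {c : ℕ} (hc : c ∈ A) (hpc : p ∣ c) :
    c = p ∨ c = p * q := by
  have hne : p ≠ p * q := fun h => hq.ne_one ((Nat.mul_eq_left hp.ne_zero).1 h.symm)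
  exact hA.eq_or_eq_of_dvd hp hpA hpqA hne dvd_rfl (dvd_mul_right p q) hc hpc

include hpq

theorem IsShelf.sq_notMem : p ^ 2 ∉ A := fun h => by
  rcases hA.eq_or_eq_of_prime_dvd hp hq hpA hpqA h (dvd_pow_self p two_ne_zero) with h | h
  · exact hp.one_lt.ne' ((Nat.mul_eq_left hp.ne_zero).1 (by rwa [sq] at h))
  · exact hpq (Nat.eq_of_mul_eq_mul_left hp.pos (by rw [← sq, h]))

theorem IsShelf.filter_dvd_exchangeProduct_subset :
    (exchangeProduct A p q).filter (p ∣ ·) ⊆ {p, p ^ 2} := by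
  intro c hc
  simp only [exchangeProduct, mem_filter, mem_insert, mem_erase] at hc
  obtain ⟨rfl | rfl | ⟨hcpq, hc⟩, hpc⟩ := hc
  · simp
  · exact absurd ((Nat.prime_dvd_prime_iff_eq hp hq).1 (hp.dvd_of_dvd_pow hpc)) hpq
  · rcases hA.eq_or_eq_of_prime_dvd hp hq hpA hpqA hc hpc with rfl | rfl
    · simp
    · exact absurd rfl hcpq

include hqA

theorem IsShelf.card_exchangeProduct : #(exchangeProduct A p q) = #A + 1 := by
  have hqpA : q * p ∈ A := mul_comm p q ▸ hpqA
  have hpq2 : p ^ 2 ≠ q ^ 2 := fun h => hpq (Nat.pow_left_injective two_ne_zero h)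
  have hp2 : p ^ 2 ∉ insert (q ^ 2) (A.erase (p * q)) := by
    simpa [hpq2] using fun _ => hA.sq_notMem hp hq hpq hpA hpqA
  have hq2 : q ^ 2 ∉ A.erase (p * q) := fun h =>
    hA.sq_notMem hq hp hpq.symm hqA hqpA (mem_of_mem_erase h)
  rw [exchangeProduct, card_insert_of_notMem hp2, card_insert_of_notMem hq2,
    card_erase_of_mem hpqA, Nat.sub_add_cancel (card_pos.2 ⟨p, hpA⟩)]

theorem IsShelf.exchangeProduct : IsShelf 2 (exchangeProduct A p q) := by
  intro r hr
  by_cases hrp : r = p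
  · subst hrp
    exact (card_le_card (hA.filter_dvd_exchangeProduct_subset hp hq hpq hpA hpqA)).trans
      card_le_two
  by_cases hrq : r = q
  · subst hrq
    rw [exchangeProduct_comm]
    exact (card_le_card (hA.filter_dvd_exchangeProduct_subset hq hp (Ne.symm hpq) hqA
      (mul_comm p r ▸ hpqA))).trans card_le_two
  refine (card_le_card fun c hc => ?_).trans (hA r hr)
  simp only [_root_.exchangeProduct, mem_filter, mem_insert, mem_erase] at hc ⊢
  obtain ⟨rfl | rfl | ⟨-, hc⟩, hrc⟩ := hc
  · exact absurd ((Nat.prime_dvd_prime_iff_eq hr hp).1 (hr.dvd_of_dvd_pow hrc)) hrp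
  · exact absurd ((Nat.prime_dvd_prime_iff_eq hr hq).1 (hr.dvd_of_dvd_pow hrc)) hrq
  · exact ⟨hc, hrc⟩

end Exchange

/-- The maximum `(6,2)`-shelf `{1,2,3,5,6}` is not a subset of any maximum
`(m,2)`-shelf for `m ≥ 9`. -/
theorem shelf_not_extendable (m : ℕ) (hm : 9 ≤ m) (A : Finset ℕ)
    (hA : A ⊆ Finset.Icc 1 m)
    (hshelf : ∀ p : ℕ, p.Prime → (A.filter (fun a => p ∣ a)).card ≤ 2)
    (hmax : ∀ B : Finset ℕ, B ⊆ Finset.Icc 1 m →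
      (∀ p : ℕ, p.Prime → (B.filter (fun a => p ∣ a)).card ≤ 2) →
      B.card ≤ A.card) :
    ¬ (({1, 2, 3, 5, 6} : Finset ℕ) ⊆ A) := by
  intro hsub
  have hshelf : IsShelf 2 A := hshelf
  have h2 : 2 ∈ A := hsub (by decide)
  have h3 : 3 ∈ A := hsub (by decide)
  have h6 : 2 * 3 ∈ A := hsub (by decide)
  have hlarger := hmax (exchangeProduct A 2 3)
    (exchangeProduct_subset_Icc hA two_pos three_pos (by omega) (by omega))
    (hshelf.exchangeProduct Nat.prime_two Nat.prime_three (by decide) h2 h3 h6)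
  rw [hshelf.card_exchangeProduct Nat.prime_two Nat.prime_three (by decide) h2 h3 h6] at hlarger
  omega
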